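/- arXiv:2105.03306 — 2 statements merged into one kernel-verified Lean document; each statement's English description precedes it below -/
import Mathlib

section
/- Let U > 0 be a real number and let H, Ĥ be K×N complex matrices, V an N×K' complex matrix, and D̂ a K×K' complex matrix. Then U·‖HV − D̂‖_F² − U·‖ĤV − D̂‖_F² ≤ 2U·(‖H‖_F·‖V‖_F + ‖D̂‖_F)·‖V‖_F·‖H − Ĥ‖_F. -/
open Matrix

noncomputable def frobNorm {m n : Type*} [Fintype m] [Fintype n]
    (A : Matrix m n ℂ) : ℝ :=
  Real.sqrt (∑ i, ∑ j, ‖A i j‖ ^ 2)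

/-!
Write `A = HV − D̂` and `B = ĤV − D̂`, so that `A − B = (H − Ĥ)V`. In any normed group
`‖A‖² − ‖B‖² ≤ 2‖A‖‖A − B‖`, and submultiplicativity of the Frobenius norm gives
`‖A‖ ≤ ‖H‖‖V‖ + ‖D̂‖` and `‖A − B‖ ≤ ‖H − Ĥ‖‖V‖`.
-/

open scoped Matrix.Norms.Frobenius

theorem sq_norm_sub_sq_norm_le {E : Type*} [SeminormedAddCommGroup E] (a b : E) :
    ‖a‖ ^ 2 - ‖b‖ ^ 2 ≤ 2 * ‖a‖ * ‖a - b‖ := by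
  rcases le_total ‖a‖ ‖b‖ with hab | hba
  · nlinarith [norm_nonneg a, norm_nonneg (a - b)]
  · have hdiff : ‖a‖ - ‖b‖ ≤ ‖a - b‖ := norm_sub_norm_le a b
    calc ‖a‖ ^ 2 - ‖b‖ ^ 2 = (‖a‖ - ‖b‖) * (‖a‖ + ‖b‖) := by ring
      _ ≤ ‖a - b‖ * (2 * ‖a‖) := by
        gcongr
        linarith
      _ = 2 * ‖a‖ * ‖a - b‖ := by ring

theorem frobNorm_eq_norm {m n : Type*} [Fintype m] [Fintype n] (A : Matrix m n ℂ) :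
    frobNorm A = ‖A‖ := by
  rw [frobNorm, frobenius_norm_def, Real.sqrt_eq_rpow]
  norm_num [Real.rpow_two]

theorem frobenius_sq_norm_mul_sub_sub_le {𝕜 l m n : Type*} [RCLike 𝕜]
    [Fintype l] [Fintype m] [Fintype n] (H Hhat : Matrix l m 𝕜) (V : Matrix m n 𝕜)
    (D : Matrix l n 𝕜) :
    ‖H * V - D‖ ^ 2 - ‖Hhat * V - D‖ ^ 2 ≤ 2 * (‖H‖ * ‖V‖ + ‖D‖) * ‖V‖ * ‖H - Hhat‖ := by
  have hA : ‖H * V - D‖ ≤ ‖H‖ * ‖V‖ + ‖D‖ :=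
    (norm_sub_le _ _).trans (by gcongr; exact frobenius_norm_mul H V)
  have hAB : ‖(H * V - D) - (Hhat * V - D)‖ ≤ ‖H - Hhat‖ * ‖V‖ := by
    rw [sub_sub_sub_cancel_right, ← Matrix.sub_mul]
    exact frobenius_norm_mul _ _
  calc ‖H * V - D‖ ^ 2 - ‖Hhat * V - D‖ ^ 2
      ≤ 2 * ‖H * V - D‖ * ‖(H * V - D) - (Hhat * V - D)‖ := sq_norm_sub_sq_norm_le _ _
    _ ≤ 2 * (‖H‖ * ‖V‖ + ‖D‖) * (‖H - Hhat‖ * ‖V‖) := by gcongr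
    _ = 2 * (‖H‖ * ‖V‖ + ‖D‖) * ‖V‖ * ‖H - Hhat‖ := by ring

/-- Step 2 in the proof of Lemma 4. -/
theorem phi_channel_perturbation_bound {K N K' : ℕ} (U : ℝ) (hU : 0 < U)
    (H Hhat : Matrix (Fin K) (Fin N) ℂ) (V : Matrix (Fin N) (Fin K') ℂ)
    (Dhat : Matrix (Fin K) (Fin K') ℂ) :
    U * frobNorm (H * V - Dhat) ^ 2 - U * frobNorm (Hhat * V - Dhat) ^ 2 ≤
      2 * U * (frobNorm H * frobNorm V + frobNorm Dhat) * frobNorm V *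
        frobNorm (H - Hhat) := by
  simp only [frobNorm_eq_norm]
  have h := mul_le_mul_of_nonneg_left (frobenius_sq_norm_mul_sub_sub_le H Hhat V Dhat) hU.le
  linarith
end

section
/- Let U > 0, Z ≥ 0, B ≥ 0, δ ≥ 0, ζ ≥ 0, η ≥ 0, P_max ≥ 0 be real numbers, and define φ(H,V,D) = U‖HV − D‖_F² + Z‖V‖_F². Let H, Ĥ be K×N complex matrices, D, D̂ K×K complex matrices, and V*, V^opt N×K complex matrices satisfying: ‖H‖_F ≤ B, ‖H − Ĥ‖_F ≤ Bδ, ‖D‖_F ≤ ζB, ‖D̂‖_F ≤ ζB(1+δ), ‖D − D̂‖_F ≤ ηBδ, ‖V*‖_F² ≤ P_max, ‖V^opt‖_F² ≤ P_max, and φ(Ĥ, V*, D̂) ≤ φ(Ĥ, V^opt, D̂). Then φ(H, V*, D) − φ(H, V^opt, D) ≤ U·φ̄, where φ̄ = 2·[(2+δ)(P_max + ζη) + 2(ζ(1+δ) + η)·√P_max]·B²·δ. -/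
open Matrix

/-- The per-slot objective φ(H, V, D) = U‖HV − D‖_F² + Z‖V‖_F². -/
noncomputable def phi {K N K' : ℕ} (U Z : ℝ)
    (H : Matrix (Fin K) (Fin N) ℂ) (V : Matrix (Fin N) (Fin K') ℂ)
    (D : Matrix (Fin K) (Fin K') ℂ) : ℝ :=
  U * frobNorm (H * V - D) ^ 2 + Z * frobNorm V ^ 2

/-!
The gap telescopes as
`[φ(H,V*,D) - φ(Ĥ,V*,D̂)] + [φ(Ĥ,V*,D̂) - φ(Ĥ,V^opt,D̂)] + [φ(Ĥ,V^opt,D̂) - φ(H,V^opt,D)]`,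
whose middle term is nonpositive by optimality of `V*`. Each outer term has a single precoder, so
its `Z`-parts cancel, and `‖HV - D‖² - ‖ĤV - D̂‖²` is bounded after expanding both squares: the
cross terms are split as `⟪HV, D⟫ - ⟪ĤV, D̂⟫ = ⟪(H - Ĥ)V, D̂⟫ + ⟪HV, D - D̂⟫`, which gives the
factor `2(ζ(1+δ) + η)` in front of `√P_max`. The cruder estimate
`‖a‖² - ‖b‖² ≤ (‖a‖ + ‖b‖)‖a - b‖` applied to the whole residuals would only give `(2+δ)(ζ + η)`.
-/

open RCLike

open scoped InnerProductSpace

section Norms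

variable {E : Type*}

lemma abs_sq_norm_sub_sq_norm_le [SeminormedAddCommGroup E] (x y : E) :
    |‖x‖ ^ 2 - ‖y‖ ^ 2| ≤ (‖x‖ + ‖y‖) * ‖x - y‖ := by
  rw [sq_sub_sq, abs_mul, abs_of_nonneg (by positivity)]
  exact mul_le_mul_of_nonneg_left (abs_norm_sub_norm_le x y) (by positivity)

variable [NormedAddCommGroup E]

lemma abs_re_inner_sub_re_inner_le {𝕜 : Type*} [RCLike 𝕜] [InnerProductSpace 𝕜 E] (x y d e : E) :
    |re ⟪x, d⟫_𝕜 - re ⟪y, e⟫_𝕜| ≤ ‖x - y‖ * ‖e‖ + ‖x‖ * ‖d - e‖ := by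
  have hsplit : re ⟪x, d⟫_𝕜 - re ⟪y, e⟫_𝕜 = re ⟪x - y, e⟫_𝕜 + re ⟪x, d - e⟫_𝕜 := by
    rw [inner_sub_left, inner_sub_right, map_sub, map_sub]; ring
  rw [hsplit]
  refine (abs_add_le _ _).trans (add_le_add ?_ ?_) <;>
    exact (abs_re_le_norm _).trans (norm_inner_le_norm _ _)

lemma abs_sq_norm_sub_sub_sq_norm_sub_le (𝕜 : Type*) [RCLike 𝕜] [InnerProductSpace 𝕜 E]
    (x y d e : E) :
    |‖x - d‖ ^ 2 - ‖y - e‖ ^ 2| ≤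
      (‖x‖ + ‖y‖) * ‖x - y‖ + 2 * (‖x - y‖ * ‖e‖ + ‖x‖ * ‖d - e‖) + (‖d‖ + ‖e‖) * ‖d - e‖ := by
  have hexpand : ‖x - d‖ ^ 2 - ‖y - e‖ ^ 2 = (‖x‖ ^ 2 - ‖y‖ ^ 2)
      - 2 * (re ⟪x, d⟫_𝕜 - re ⟪y, e⟫_𝕜) + (‖d‖ ^ 2 - ‖e‖ ^ 2) := by
    rw [norm_sub_sq (𝕜 := 𝕜), norm_sub_sq (𝕜 := 𝕜)]; ring
  have hx := abs_sq_norm_sub_sq_norm_le x y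
  have hinner := abs_re_inner_sub_re_inner_le (𝕜 := 𝕜) x y d e
  have hd := abs_sq_norm_sub_sq_norm_le d e
  rw [hexpand]
  calc _ ≤ |‖x‖ ^ 2 - ‖y‖ ^ 2| + |2 * (re ⟪x, d⟫_𝕜 - re ⟪y, e⟫_𝕜)| + |‖d‖ ^ 2 - ‖e‖ ^ 2| :=
        (abs_add_le _ _).trans (add_le_add_left (abs_sub _ _) _)
    _ ≤ _ := by rw [abs_mul, abs_two]; gcongr

lemma abs_sq_norm_sub_sub_sq_norm_sub_le_of_le (𝕜 : Type*) [RCLike 𝕜] [InnerProductSpace 𝕜 E]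
    {x y d e : E} {a a' b c c' g : ℝ} (hx : ‖x‖ ≤ a) (hy : ‖y‖ ≤ a') (hxy : ‖x - y‖ ≤ b)
    (hd : ‖d‖ ≤ c) (he : ‖e‖ ≤ c') (hde : ‖d - e‖ ≤ g) :
    |‖x - d‖ ^ 2 - ‖y - e‖ ^ 2| ≤ (a + a') * b + 2 * (b * c' + a * g) + (c + c') * g := by
  have ha := (norm_nonneg x).trans hx
  have ha' := (norm_nonneg y).trans hy
  have hb := (norm_nonneg _).trans hxy
  have hc := (norm_nonneg d).trans hd
  have hc' := (norm_nonneg e).trans he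
  refine (abs_sq_norm_sub_sub_sq_norm_sub_le 𝕜 x y d e).trans ?_
  gcongr

end Norms

section Frobenius

variable {m n : Type*}

noncomputable def frobeniusVec (A : Matrix m n ℂ) : EuclideanSpace ℂ (m × n) :=
  WithLp.toLp 2 fun p => A p.1 p.2

lemma frobeniusVec_sub (A B : Matrix m n ℂ) :
    frobeniusVec (A - B) = frobeniusVec A - frobeniusVec B := rfl

variable [Fintype m] [Fintype n]

lemma frobNorm_eq_norm_frobeniusVec (A : Matrix m n ℂ) : frobNorm A = ‖frobeniusVec A‖ := by
  rw [frobNorm, EuclideanSpace.norm_eq, Fintype.sum_prod_type]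
  rfl

lemma frobNorm_nonneg (A : Matrix m n ℂ) : 0 ≤ frobNorm A :=
  Real.sqrt_nonneg _

attribute [local instance] Matrix.frobeniusNormedAddCommGroup

lemma frobNorm_eq_frobenius_norm (A : Matrix m n ℂ) : frobNorm A = ‖A‖ := by
  simp only [frobNorm, Matrix.frobenius_norm_def, Real.sqrt_eq_rpow, Real.rpow_two]

lemma frobNorm_mul_le {l : Type*} [Fintype l] (A : Matrix l m ℂ) (B : Matrix m n ℂ) :
    frobNorm (A * B) ≤ frobNorm A * frobNorm B := by
  simpa only [frobNorm_eq_frobenius_norm] using Matrix.frobenius_norm_mul A B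

end Frobenius

lemma abs_phi_sub_phi_le {K N K' : ℕ} {U Z B δ ζ η Pmax : ℝ} (hU : 0 ≤ U)
    {H Hhat : Matrix (Fin K) (Fin N) ℂ} {D Dhat : Matrix (Fin K) (Fin K') ℂ}
    {V : Matrix (Fin N) (Fin K') ℂ}
    (hH : frobNorm H ≤ B) (hHH : frobNorm (H - Hhat) ≤ B * δ)
    (hD : frobNorm D ≤ ζ * B) (hDhat : frobNorm Dhat ≤ ζ * B * (1 + δ))
    (hDD : frobNorm (D - Dhat) ≤ η * B * δ) (hV : frobNorm V ^ 2 ≤ Pmax) :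
    |phi U Z H V D - phi U Z Hhat V Dhat| ≤
      U * (((2 + δ) * (Pmax + ζ * η) + 2 * (ζ * (1 + δ) + η) * √Pmax) * B ^ 2 * δ) := by
  set s := √Pmax
  have hs : Pmax = s ^ 2 := (Real.sq_sqrt ((sq_nonneg _).trans hV)).symm
  have hVs : frobNorm V ≤ s := (le_abs_self _).trans (Real.abs_le_sqrt hV)
  have hx : frobNorm (H * V) ≤ B * s :=
    (frobNorm_mul_le H V).trans
      (mul_le_mul hH hVs (frobNorm_nonneg V) ((frobNorm_nonneg H).trans hH))
  have hxy : frobNorm (H * V - Hhat * V) ≤ B * δ * s := by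
    rw [← Matrix.sub_mul]
    exact (frobNorm_mul_le _ V).trans
      (mul_le_mul hHH hVs (frobNorm_nonneg V) ((frobNorm_nonneg _).trans hHH))
  simp only [frobNorm_eq_norm_frobeniusVec, frobeniusVec_sub] at hx hxy hD hDhat hDD
  have hy := (norm_le_norm_add_norm_sub _ _).trans (add_le_add hx hxy)
  have hquad := abs_sq_norm_sub_sub_sq_norm_sub_le_of_le ℂ hx hy hxy hD hDhat hDD
  have hphi : phi U Z H V D - phi U Z Hhat V Dhat =
      U * (‖frobeniusVec (H * V) - frobeniusVec D‖ ^ 2 -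
        ‖frobeniusVec (Hhat * V) - frobeniusVec Dhat‖ ^ 2) := by
    simp only [phi, frobNorm_eq_norm_frobeniusVec, frobeniusVec_sub]; ring
  rw [hphi, abs_mul, abs_of_nonneg hU]
  refine mul_le_mul_of_nonneg_left (hquad.trans_eq ?_) hU
  rw [hs]; ring

theorem optimality_gap_imperfect_csi_general {K N : ℕ} (U Z B δ ζ η Pmax : ℝ)
    (hU : 0 < U)
    (H Hhat : Matrix (Fin K) (Fin N) ℂ) (D Dhat : Matrix (Fin K) (Fin K) ℂ)
    (Vstar Vopt : Matrix (Fin N) (Fin K) ℂ)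
    (hH : frobNorm H ≤ B) (hHH : frobNorm (H - Hhat) ≤ B * δ)
    (hD : frobNorm D ≤ ζ * B) (hDhat : frobNorm Dhat ≤ ζ * B * (1 + δ))
    (hDD : frobNorm (D - Dhat) ≤ η * B * δ)
    (hVs : frobNorm Vstar ^ 2 ≤ Pmax) (hVo : frobNorm Vopt ^ 2 ≤ Pmax)
    (hopt : phi U Z Hhat Vstar Dhat ≤ phi U Z Hhat Vopt Dhat) :
    phi U Z H Vstar D - phi U Z H Vopt D ≤
      U * (2 * ((2 + δ) * (Pmax + ζ * η) +
        2 * (ζ * (1 + δ) + η) * Real.sqrt Pmax) * B ^ 2 * δ) := by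
  obtain ⟨-, hstar⟩ := abs_le.mp (abs_phi_sub_phi_le (Z := Z) hU.le hH hHH hD hDhat hDD hVs)
  obtain ⟨hopt', -⟩ := abs_le.mp (abs_phi_sub_phi_le (Z := Z) hU.le hH hHH hD hDhat hDD hVo)
  linarith

/-- Lemma 4 of the paper stated deterministically: the optimality gap caused
by imperfect CSI is at most U·φ̄ = O(δ). -/
theorem optimality_gap_imperfect_csi {K N : ℕ} (U Z B δ ζ η Pmax : ℝ)
    (hU : 0 < U) (hZ : 0 ≤ Z) (hB : 0 ≤ B) (hδ : 0 ≤ δ) (hζ : 0 ≤ ζ)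
    (hη : 0 ≤ η) (hPmax : 0 ≤ Pmax)
    (H Hhat : Matrix (Fin K) (Fin N) ℂ) (D Dhat : Matrix (Fin K) (Fin K) ℂ)
    (Vstar Vopt : Matrix (Fin N) (Fin K) ℂ)
    (hH : frobNorm H ≤ B) (hHH : frobNorm (H - Hhat) ≤ B * δ)
    (hD : frobNorm D ≤ ζ * B) (hDhat : frobNorm Dhat ≤ ζ * B * (1 + δ))
    (hDD : frobNorm (D - Dhat) ≤ η * B * δ)
    (hVs : frobNorm Vstar ^ 2 ≤ Pmax) (hVo : frobNorm Vopt ^ 2 ≤ Pmax)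
    (hopt : phi U Z Hhat Vstar Dhat ≤ phi U Z Hhat Vopt Dhat) :
    phi U Z H Vstar D - phi U Z H Vopt D ≤
      U * (2 * ((2 + δ) * (Pmax + ζ * η) +
        2 * (ζ * (1 + δ) + η) * Real.sqrt Pmax) * B ^ 2 * δ) :=
  optimality_gap_imperfect_csi_general U Z B δ ζ η Pmax hU H Hhat D Dhat Vstar Vopt hH hHH hD hDhat
    hDD hVs hVo hopt
end
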